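/- Let q₁, q₂ ∈ ℂ* satisfy q₁²q₂ = 1, q₁ ≠ 1, q₂ ≠ 1 and q₁q₂ ≠ 1. Then for all one-variable Laurent polynomials f, g, h over ℂ and every α ∈ ℂ*, the iterated shuffle product f * g * h ∈ S₃ is defined at the point (α, q₁α, q₁q₂α) (whose coordinates are pairwise distinct) and vanishes there: (f * g * h)(α, q₁α, q₁q₂α) = 0. -/

import Mathlib

open MvPolynomial

noncomputable section ShuffleAlgebra

variable (K : Type) [Field K]

/-- The field of rational functions in countably many variables `z 0, z 1, …` over `K`. -/
abbrev RF := FractionRing (MvPolynomial ℕ K)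

/-- The variable `z i` as a rational function. -/
def Z (i : ℕ) : RF K := algebraMap (MvPolynomial ℕ K) (RF K) (X i)

/-- A constant, viewed as a rational function. -/
def cst (q : K) : RF K := algebraMap (MvPolynomial ℕ K) (RF K) (C q)

/-- Substitution `z i ↦ z (f i)` for an injective `f`, as a ring homomorphism of
rational functions. -/
def ren (f : ℕ → ℕ) (hf : Function.Injective f) : RF K →+* RF K :=
  IsFractionRing.lift (g := (algebraMap (MvPolynomial ℕ K) (RF K)).comp (rename f).toRingHom)
    ((IsFractionRing.injective (MvPolynomial ℕ K) (RF K)).comp (rename_injective f hf))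

/-- A permutation of `Fin k` extended (by the identity) to a permutation of `ℕ`. -/
def natPerm (k : ℕ) (σ : Equiv.Perm (Fin k)) : Equiv.Perm ℕ :=
  σ.extendDomain Fin.equivSubtype

/-- `Alt_{S_k}(F) = (1/k!) ∑_{σ ∈ S_k} sgn(σ) F(z_{σ(1)},…,z_{σ(k)})`. -/
def Alt (k : ℕ) (F : RF K) : RF K :=
  (k.factorial : RF K)⁻¹ *
    ∑ σ : Equiv.Perm (Fin k),
      ((Equiv.Perm.sign σ : ℤ) : RF K) * ren K (natPerm k σ) (natPerm k σ).injective F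

variable (q₁ q₂ : K)

/-- `μ(x,y) = (x − q₁y)(x − q₂y)/(x − y)²`. -/
def mu (x y : RF K) : RF K := (x - cst K q₁ * y) * (x - cst K q₂ * y) / (x - y) ^ 2

/-- The shuffle product of `F` (a function of `z 0, …, z (n-1)`) and `G`
(a function of `z 0, …, z (m-1)`). -/
def shuffle (n m : ℕ) (F G : RF K) : RF K :=
  Alt K (n + m) (F * ren K (· + n) (add_left_injective n) G *
    ∏ i : Fin n, ∏ j : Fin m, mu K q₁ q₂ (Z K i.val) (Z K (n + j.val)))

/-- The Vandermonde determinant `Δ_n = ∏_{i<j} (z i − z j)`. -/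
def vand (n : ℕ) : RF K :=
  algebraMap (MvPolynomial ℕ K) (RF K)
    (∏ j ∈ Finset.range n, ∏ i ∈ Finset.range j, (X i - X j))

/-- `f` is a symmetric Laurent polynomial in the variables `z 0, …, z (n-1)`. -/
def IsSymLaurent (n : ℕ) (f : RF K) : Prop :=
  (∃ (p : MvPolynomial ℕ K) (N : ℕ), (↑p.vars : Set ℕ) ⊆ Set.Iio n ∧
      f * algebraMap (MvPolynomial ℕ K) (RF K) ((∏ i ∈ Finset.range n, X i) ^ N)
        = algebraMap (MvPolynomial ℕ K) (RF K) p) ∧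
  ∀ σ : Equiv.Perm (Fin n), ren K (natPerm n σ) (natPerm n σ).injective f = f

/-- The `n`-th graded component `S_n` of the shuffle algebra: quotients `f/Δ_n` with
`f` a symmetric Laurent polynomial in `z 0, …, z (n-1)`. -/
def Sgr (n : ℕ) : Set (RF K) :=
  {F | ∃ f : RF K, IsSymLaurent K n f ∧ F = f / vand K n}

/-- Iterated (left-to-right) shuffle product of a list of elements of `S₁`. -/
def iterSh (l : List (RF K)) : RF K :=
  (l.foldl (fun acc f => (shuffle K q₁ q₂ acc.2 1 acc.1 f, acc.2 + 1)) ((1 : RF K), 0)).1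

/-- The iterated shuffle product `z^{i₁} * ⋯ * z^{i_n}`. -/
def zpows (l : List ℤ) : RF K := iterSh K q₁ q₂ (l.map fun i => Z K 0 ^ i)

/-- `F` is defined at the point `α` and its value there is `v`. -/
def EvalAt (α : ℕ → K) (F : RF K) (v : K) : Prop :=
  ∃ p q : MvPolynomial ℕ K, eval α q ≠ 0 ∧
    F * algebraMap (MvPolynomial ℕ K) (RF K) q = algebraMap (MvPolynomial ℕ K) (RF K) p ∧
    eval α p = v * eval α q

end ShuffleAlgebra


/-!
Unfolding the last shuffle, `f * g * h = Alt_{S₃}((f * g)(z₀, z₁) h(z₂) μ(z₀, z₂) μ(z₁, z₂))`.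
At a point with nonzero, pairwise distinct coordinates every factor of every term is defined.
The point `(α, q₁α, q₁q₂α)` is moreover a wheel: since `q₁²q₂ = 1`, the chain
`α ↦ q₁α ↦ q₂(q₁α) ↦ q₁(q₁q₂α) = α` is a cycle, so each coordinate `z_k` has another coordinate
`z_i ∈ {q₁z_k, q₂z_k}`. Whichever coordinate a permutation puts last, one of the two factors
`μ(z_i, z₂)` vanishes, hence so does every term of the alternation.
-/

open Equiv Set

section EvalAt

variable {K : Type} [Field K] {a : ℕ → K} {F G : RF K} {v w : K}

theorem EvalAt.of_mul_algebraMap_eq {p q : MvPolynomial ℕ K} (hq : eval a q ≠ 0)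
    (h : F * algebraMap _ (RF K) q = algebraMap _ (RF K) p) :
    EvalAt K a F (eval a p / eval a q) :=
  ⟨p, q, hq, h, (div_mul_cancel₀ _ hq).symm⟩

theorem evalAt_algebraMap (a : ℕ → K) (p : MvPolynomial ℕ K) :
    EvalAt K a (algebraMap _ (RF K) p) (eval a p) :=
  ⟨p, 1, by simp, by simp, by simp⟩

theorem evalAt_Z (a : ℕ → K) (i : ℕ) : EvalAt K a (Z K i) (a i) := by
  simpa [Z] using evalAt_algebraMap a (X i)

theorem evalAt_cst (a : ℕ → K) (c : K) : EvalAt K a (cst K c) c := by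
  simpa [cst] using evalAt_algebraMap a (C c)

theorem evalAt_intCast (a : ℕ → K) (n : ℤ) : EvalAt K a (n : RF K) n := by
  simpa using evalAt_algebraMap a (n : MvPolynomial ℕ K)

theorem EvalAt.mul (hF : EvalAt K a F v) (hG : EvalAt K a G w) :
    EvalAt K a (F * G) (v * w) := by
  obtain ⟨p, q, hq, hFq, hp⟩ := hF
  obtain ⟨p', q', hq', hGq, hp'⟩ := hG
  refine ⟨p * p', q * q', by simp [hq, hq'], ?_, ?_⟩
  · rw [map_mul, map_mul, mul_mul_mul_comm, hFq, hGq]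
  · simp only [map_mul, hp, hp']; ring

theorem EvalAt.add (hF : EvalAt K a F v) (hG : EvalAt K a G w) :
    EvalAt K a (F + G) (v + w) := by
  obtain ⟨p, q, hq, hFq, hp⟩ := hF
  obtain ⟨p', q', hq', hGq, hp'⟩ := hG
  refine ⟨p * q' + p' * q, q * q', by simp [hq, hq'], ?_, ?_⟩
  · simp only [map_mul, map_add]
    linear_combination algebraMap _ (RF K) q' * hFq + algebraMap _ (RF K) q * hGq
  · simp only [map_mul, map_add, hp, hp']; ring

theorem EvalAt.neg (hF : EvalAt K a F v) : EvalAt K a (-F) (-v) := by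
  obtain ⟨p, q, hq, hFq, hp⟩ := hF
  exact ⟨-p, q, hq, by rw [neg_mul, hFq, map_neg], by simp [hp]⟩

theorem EvalAt.sub (hF : EvalAt K a F v) (hG : EvalAt K a G w) :
    EvalAt K a (F - G) (v - w) := by
  simpa [sub_eq_add_neg] using hF.add hG.neg

theorem EvalAt.inv (hF : EvalAt K a F v) (hv : v ≠ 0) : EvalAt K a F⁻¹ v⁻¹ := by
  obtain ⟨p, q, hq, hFq, hp⟩ := hF
  have hp0 : eval a p ≠ 0 := by rw [hp]; exact mul_ne_zero hv hq
  have hF0 : F ≠ 0 := by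
    rintro rfl
    refine hp0 ?_
    rw [zero_mul, eq_comm, map_eq_zero_iff _ (IsFractionRing.injective _ (RF K))] at hFq
    simp [hFq]
  refine ⟨q, p, hp0, ?_, ?_⟩
  · rw [← hFq, ← mul_assoc, inv_mul_cancel₀ hF0, one_mul]
  · rw [hp]; field_simp

theorem EvalAt.div (hF : EvalAt K a F v) (hG : EvalAt K a G w) (hw : w ≠ 0) :
    EvalAt K a (F / G) (v / w) := by
  simpa [div_eq_mul_inv] using hF.mul (hG.inv hw)

theorem evalAt_sum {ι : Type*} (s : Finset ι) {F : ι → RF K} {v : ι → K}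
    (h : ∀ i ∈ s, EvalAt K a (F i) (v i)) : EvalAt K a (∑ i ∈ s, F i) (∑ i ∈ s, v i) := by
  classical
  induction s using Finset.induction with
  | empty => simpa using evalAt_algebraMap a 0
  | insert x s hx ih =>
    rw [Finset.sum_insert hx, Finset.sum_insert hx]
    exact (h x (by simp)).add (ih fun i hi => h i (by simp [hi]))

theorem evalAt_prod {ι : Type*} (s : Finset ι) {F : ι → RF K} {v : ι → K}
    (h : ∀ i ∈ s, EvalAt K a (F i) (v i)) : EvalAt K a (∏ i ∈ s, F i) (∏ i ∈ s, v i) := by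
  classical
  induction s using Finset.induction with
  | empty => simpa using evalAt_algebraMap a 1
  | insert x s hx ih =>
    rw [Finset.prod_insert hx, Finset.prod_insert hx]
    exact (h x (by simp)).mul (ih fun i hi => h i (by simp [hi]))

theorem ren_algebraMap (g : ℕ → ℕ) (hg : Function.Injective g) (p : MvPolynomial ℕ K) :
    ren K g hg (algebraMap _ (RF K) p) = algebraMap _ (RF K) (rename g p) :=
  IsFractionRing.lift_algebraMap _ _

theorem EvalAt.ren {g : ℕ → ℕ} (hg : Function.Injective g) (h : EvalAt K (a ∘ g) F v) :
    EvalAt K a (_root_.ren K g hg F) v := by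
  obtain ⟨p, q, hq, hFq, hp⟩ := h
  refine ⟨rename g p, rename g q, by rwa [eval_rename], ?_, by rwa [eval_rename, eval_rename]⟩
  simpa only [map_mul, ren_algebraMap] using congrArg (_root_.ren K g hg) hFq

theorem evalAt_of_isSymLaurent {n : ℕ} (hF : IsSymLaurent K n F) (ha : ∀ i < n, a i ≠ 0) :
    ∃ v, EvalAt K a F v := by
  obtain ⟨⟨p, N, -, hp⟩, -⟩ := hF
  refine ⟨_, EvalAt.of_mul_algebraMap_eq ?_ hp⟩
  simp only [map_pow, map_prod, eval_X]
  exact pow_ne_zero _ (Finset.prod_ne_zero_iff.mpr fun i hi => ha i (Finset.mem_range.mp hi))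

theorem evalAt_mu (q₁ q₂ : K) {x y : ℕ} (hxy : a x ≠ a y) :
    EvalAt K a (mu K q₁ q₂ (Z K x) (Z K y))
      ((a x - q₁ * a y) * (a x - q₂ * a y) / (a x - a y) ^ 2) := by
  have hx := evalAt_Z a x
  have hy := evalAt_Z a y
  refine EvalAt.div ?_ ?_ (pow_ne_zero 2 (sub_ne_zero_of_ne hxy))
  · exact (hx.sub ((evalAt_cst a q₁).mul hy)).mul (hx.sub ((evalAt_cst a q₂).mul hy))
  · simpa [pow_two] using (hx.sub hy).mul (hx.sub hy)

theorem evalAt_Alt [CharZero K] {k : ℕ} {v : Perm (Fin k) → K}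
    (hv : ∀ σ : Perm (Fin k), EvalAt K (a ∘ natPerm k σ) F (v σ)) :
    EvalAt K a (Alt K k F) ((k.factorial : K)⁻¹ * ∑ σ, (Perm.sign σ : ℤ) * v σ) := by
  have hfac : EvalAt K a (k.factorial : RF K) k.factorial := by
    simpa using evalAt_intCast a k.factorial
  exact (hfac.inv (Nat.cast_ne_zero.mpr k.factorial_ne_zero)).mul
    (evalAt_sum _ fun σ _ => (evalAt_intCast a _).mul ((hv σ).ren _))

end EvalAt

section AdmissiblePoints

variable {K : Type} [Field K] {n : ℕ} {a : ℕ → K}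

theorem natPerm_apply_of_lt {k i : ℕ} (σ : Perm (Fin k)) (h : i < k) :
    natPerm k σ i = σ ⟨i, h⟩ := by
  rw [natPerm, Perm.extendDomain_apply_subtype _ Fin.equivSubtype h]
  simp [Fin.equivSubtype]

theorem natPerm_lt {k i : ℕ} (σ : Perm (Fin k)) (h : i < k) : natPerm k σ i < k := by
  rw [natPerm_apply_of_lt σ h]
  exact Fin.is_lt _

theorem natPerm_inv (k : ℕ) (σ : Perm (Fin k)) : (natPerm k σ)⁻¹ = natPerm k σ⁻¹ :=
  Perm.extendDomain_inv _ _

def IsAdmissible (n : ℕ) (a : ℕ → K) : Prop :=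
  (∀ i < n, a i ≠ 0) ∧ InjOn a (Iio n)

def IsWheel (q₁ q₂ : K) (n : ℕ) (a : ℕ → K) : Prop :=
  ∀ k < n, ∃ i < n, i ≠ k ∧ (a i = q₁ * a k ∨ a i = q₂ * a k)

theorem IsAdmissible.mono {m : ℕ} (ha : IsAdmissible n a) (hmn : m ≤ n) : IsAdmissible m a :=
  ⟨fun i hi => ha.1 i (hi.trans_le hmn), ha.2.mono (Iio_subset_Iio hmn)⟩

theorem IsAdmissible.comp_natPerm (ha : IsAdmissible n a) (σ : Perm (Fin n)) :
    IsAdmissible n (a ∘ natPerm n σ) :=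
  ⟨fun _ hi => ha.1 _ (natPerm_lt σ hi),
    ha.2.comp (natPerm n σ).injective.injOn fun _ hi => natPerm_lt σ hi⟩

theorem IsWheel.comp_natPerm {q₁ q₂ : K} (ha : IsWheel q₁ q₂ n a) (σ : Perm (Fin n)) :
    IsWheel q₁ q₂ n (a ∘ natPerm n σ) := by
  intro k hk
  obtain ⟨i, hi, hik, hμ⟩ := ha _ (natPerm_lt σ hk)
  refine ⟨(natPerm n σ)⁻¹ i, natPerm_inv n σ ▸ natPerm_lt σ⁻¹ hi, ?_, ?_⟩
  · rintro rfl
    exact hik (by simp)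
  · simpa using hμ

theorem isWheel_three {q₁ q₂ : K} (hrel : q₁ ^ 2 * q₂ = 1) (α : K) :
    IsWheel q₁ q₂ 3 fun k =>
      if k = 0 then α else if k = 1 then q₁ * α else if k = 2 then q₁ * q₂ * α else 0 := by
  intro k hk
  interval_cases k
  · exact ⟨1, by norm_num, by norm_num, Or.inl rfl⟩
  · exact ⟨2, by norm_num, by norm_num, Or.inr (show q₁ * q₂ * α = q₂ * (q₁ * α) by ring)⟩
  · refine ⟨0, by norm_num, by norm_num, Or.inl ?_⟩
    show α = q₁ * (q₁ * q₂ * α)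
    linear_combination -α * hrel

end AdmissiblePoints

section Shuffle

variable {K : Type} [Field K] (q₁ q₂ : K) {n : ℕ} {a : ℕ → K} {F G : RF K}

def DefinedAtAdmissible (n : ℕ) (F : RF K) : Prop :=
  ∀ a : ℕ → K, IsAdmissible n a → ∃ v, EvalAt K a F v

theorem exists_evalAt_shuffle_summand (hF : DefinedAtAdmissible n F) (hG : IsSymLaurent K 1 G)
    (ha : IsAdmissible (n + 1) a) :
    ∃ v, EvalAt K a (F * ren K (· + n) (add_left_injective n) G *
        ∏ i : Fin n, ∏ j : Fin 1, mu K q₁ q₂ (Z K i.val) (Z K (n + j.val)))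
      (v * ∏ i : Fin n, (a i - q₁ * a n) * (a i - q₂ * a n) / (a i - a n) ^ 2) := by
  obtain ⟨v, hv⟩ := hF a (ha.mono n.le_succ)
  obtain ⟨w, hw⟩ := evalAt_of_isSymLaurent (a := a ∘ (· + n)) hG fun i hi => by
    simpa [Nat.lt_one_iff.mp hi] using ha.1 n n.lt_succ_self
  refine ⟨v * w, (hv.mul (hw.ren _)).mul (evalAt_prod _ fun i _ => ?_)⟩
  simp only [Fin.prod_univ_one, Fin.val_zero, add_zero]
  exact evalAt_mu q₁ q₂ (ha.2.ne (mem_Iio.2 (by omega)) (mem_Iio.2 n.lt_succ_self) i.is_lt.ne)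

theorem DefinedAtAdmissible.shuffle [CharZero K] (hF : DefinedAtAdmissible n F)
    (hG : IsSymLaurent K 1 G) :
    DefinedAtAdmissible (n + 1) (shuffle K q₁ q₂ n 1 F G) := by
  intro a ha
  choose v hv using fun σ => exists_evalAt_shuffle_summand q₁ q₂ hF hG (ha.comp_natPerm σ)
  exact ⟨_, evalAt_Alt hv⟩

theorem evalAt_shuffle_eq_zero_of_isWheel [CharZero K] (hF : DefinedAtAdmissible n F)
    (hG : IsSymLaurent K 1 G) (ha : IsAdmissible (n + 1) a) (hwheel : IsWheel q₁ q₂ (n + 1) a) :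
    EvalAt K a (shuffle K q₁ q₂ n 1 F G) 0 := by
  have hterm : ∀ σ, EvalAt K (a ∘ natPerm (n + 1) σ) (F * ren K (· + n) (add_left_injective n) G *
      ∏ i : Fin n, ∏ j : Fin 1, mu K q₁ q₂ (Z K i.val) (Z K (n + j.val))) 0 := by
    intro σ
    obtain ⟨v, hv⟩ := exists_evalAt_shuffle_summand q₁ q₂ hF hG (ha.comp_natPerm σ)
    obtain ⟨i, hi, hin, hμ⟩ := hwheel.comp_natPerm σ n n.lt_succ_self
    set b := a ∘ natPerm (n + 1) σ
    have hμ_zero : ∏ i : Fin n, (b i - q₁ * b n) * (b i - q₂ * b n) / (b i - b n) ^ 2 = 0 :=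
      Finset.prod_eq_zero (Finset.mem_univ ⟨i, by omega⟩) (by rcases hμ with hμ | hμ <;> simp [hμ])
    rwa [hμ_zero, mul_zero] at hv
  have h := evalAt_Alt hterm
  simp only [mul_zero, Finset.sum_const_zero] at h
  exact h

theorem iterSh_append_singleton (l : List (RF K)) (f : RF K) :
    iterSh K q₁ q₂ (l ++ [f]) = shuffle K q₁ q₂ l.length 1 (iterSh K q₁ q₂ l) f := by
  have hlen : ∀ (l : List (RF K)) (F : RF K) (n : ℕ),
      (l.foldl (fun acc f => (shuffle K q₁ q₂ acc.2 1 acc.1 f, acc.2 + 1)) (F, n)).2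
        = n + l.length := by
    intro l
    induction l with
    | nil => simp
    | cons f l ih => intro F n; simp only [List.foldl_cons, ih, List.length_cons]; omega
  simp [iterSh, List.foldl_append, hlen]

theorem definedAtAdmissible_iterSh [CharZero K] (l : List (RF K))
    (hl : ∀ f ∈ l, IsSymLaurent K 1 f) :
    DefinedAtAdmissible l.length (iterSh K q₁ q₂ l) := by
  induction l using List.reverseRecOn with
  | nil => exact fun a _ => ⟨1, by simpa [iterSh] using evalAt_algebraMap a 1⟩
  | append_singleton l f ih =>
    rw [iterSh_append_singleton, List.length_append, List.length_singleton]
    exact (ih fun g hg => hl g (by simp [hg])).shuffle q₁ q₂ (hl f (by simp))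

end Shuffle

theorem iterSh_vanishes_nongeneric_general (q₁ q₂ : ℂ)
    (hrel : q₁ ^ 2 * q₂ = 1) (h1 : q₁ ≠ 1) (h2 : q₂ ≠ 1) (h3 : q₁ * q₂ ≠ 1)
    (f g h : RF ℂ) (hf : IsSymLaurent ℂ 1 f) (hg : IsSymLaurent ℂ 1 g)
    (hh : IsSymLaurent ℂ 1 h) (α : ℂ) (hα : α ≠ 0) :
    (α ≠ q₁ * α ∧ α ≠ q₁ * q₂ * α ∧ q₁ * α ≠ q₁ * q₂ * α) ∧
    EvalAt ℂ
      (fun k => if k = 0 then α else if k = 1 then q₁ * α else if k = 2 then q₁ * q₂ * α else 0)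
      (iterSh ℂ q₁ q₂ [f, g, h]) 0 := by
  have hq₁ : q₁ ≠ 0 := by rintro rfl; norm_num at hrel
  have hq₂ : q₂ ≠ 0 := by rintro rfl; norm_num at hrel
  have hdistinct : α ≠ q₁ * α ∧ α ≠ q₁ * q₂ * α ∧ q₁ * α ≠ q₁ * q₂ * α :=
    ⟨fun e => h1 (mul_right_cancel₀ hα (by linear_combination -e)),
      fun e => h3 (mul_right_cancel₀ hα (by linear_combination -e)),
      fun e => h2 (mul_right_cancel₀ (mul_ne_zero hq₁ hα) (by linear_combination -e))⟩
  refine ⟨hdistinct, ?_⟩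
  set pt : ℕ → ℂ :=
    fun k => if k = 0 then α else if k = 1 then q₁ * α else if k = 2 then q₁ * q₂ * α else 0
  have hadm : IsAdmissible 3 pt := by
    refine ⟨fun i hi => ?_, fun i hi j hj hij => ?_⟩
    · interval_cases i <;> simp [pt, hα, hq₁, hq₂]
    · simp only [mem_Iio] at hi hj
      interval_cases i <;> interval_cases j <;> simp_all [pt]
  rw [show [f, g, h] = [f, g] ++ [h] from rfl, iterSh_append_singleton]
  exact evalAt_shuffle_eq_zero_of_isWheel q₁ q₂
    (definedAtAdmissible_iterSh q₁ q₂ [f, g] (by simp [hf, hg])) hh hadm (isWheel_three hrel α)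

/-- if `q₁² q₂ = 1` with `q₁, q₂ ∈ ℂ*`, `q₁ ≠ 1`, `q₂ ≠ 1`, `q₁q₂ ≠ 1`,
then every iterated shuffle product `f * g * h` of one-variable Laurent polynomials is
defined at the point `(α, q₁α, q₁q₂α)` (whose coordinates are pairwise distinct) and
vanishes there. -/
theorem iterSh_vanishes_nongeneric (q₁ q₂ : ℂ) (hq₁ : q₁ ≠ 0) (hq₂ : q₂ ≠ 0)
    (hrel : q₁ ^ 2 * q₂ = 1) (h1 : q₁ ≠ 1) (h2 : q₂ ≠ 1) (h3 : q₁ * q₂ ≠ 1)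
    (f g h : RF ℂ) (hf : IsSymLaurent ℂ 1 f) (hg : IsSymLaurent ℂ 1 g)
    (hh : IsSymLaurent ℂ 1 h) (α : ℂ) (hα : α ≠ 0) :
    (α ≠ q₁ * α ∧ α ≠ q₁ * q₂ * α ∧ q₁ * α ≠ q₁ * q₂ * α) ∧
    EvalAt ℂ
      (fun k => if k = 0 then α else if k = 1 then q₁ * α else if k = 2 then q₁ * q₂ * α else 0)
      (iterSh ℂ q₁ q₂ [f, g, h]) 0 :=
  iterSh_vanishes_nongeneric_general q₁ q₂ hrel h1 h2 h3 f g h hf hg hh α hα
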